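/- arXiv:1810.00458 — 3 statements merged into one kernel-verified Lean document; each statement's English description precedes it below -/
import Mathlib

section
/- If A is an element of Sym²(W) ⊗ b_{r-1} (i.e. a tensor A_{k₁l₁k₂l₂…k_rl_r} symmetric in the pair (k₁,l₁), antisymmetric in k₂,…,k_r and in l₂,…,l_r) that is moreover symmetric under exchanging the pair (k₁,l₁) with (k₂,l₂) and with (k₃,l₃), then A is antisymmetric in all of k₁,…,k_r and in all of l₁,…,l_r, i.e. A lies in Λʳ(W) ⊗ Λʳ(W). -/
private lemma fin_facts (r' : ℕ) : (1 : Fin (r' + 3)) ≠ 0 ∧ (2 : Fin (r' + 3)) ≠ 0 ∧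
    (1 : Fin (r' + 3)) ≠ 2 := by
  refine ⟨?_, ?_, ?_⟩ <;>
  · simp only [ne_eq, Fin.ext_iff, Fin.val_one, Fin.val_two, Fin.val_zero]
    omega

/-- Extend antisymmetry from `swap 0 1` and swaps of nonzero indices to all swaps. -/
private lemma extend_antisym {N m : ℕ} (B : (Fin (m + 3) → Fin N) → ℝ)
    (h01 : ∀ k, B (k ∘ Equiv.swap 0 1) = - B k)
    (hnz : ∀ (k : Fin (m + 3) → Fin N) (i j : Fin (m + 3)), i ≠ 0 → j ≠ 0 → i ≠ j →
      B (k ∘ Equiv.swap i j) = - B k) :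
    ∀ (k : Fin (m + 3) → Fin N) (i j : Fin (m + 3)), i ≠ j →
      B (k ∘ Equiv.swap i j) = - B k := by
  obtain ⟨h10, _, _⟩ := fin_facts m
  have h0j : ∀ (k : Fin (m + 3) → Fin N) (j : Fin (m + 3)), j ≠ 0 →
      B (k ∘ Equiv.swap 0 j) = - B k := by
    intro k j hj
    by_cases hj1 : j = 1
    · subst hj1; exact h01 k
    · have hconj : Equiv.swap (1 : Fin (m + 3)) j * Equiv.swap 0 1 * Equiv.swap 1 j
          = Equiv.swap j 0 :=
        Equiv.swap_mul_swap_mul_swap h10.symm (Ne.symm hj)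
      have hfun : k ∘ Equiv.swap 0 j
          = (((k ∘ Equiv.swap 1 j) ∘ Equiv.swap 0 1) ∘ Equiv.swap 1 j) := by
        rw [Equiv.swap_comm 0 j, ← hconj]
        rfl
      rw [hfun, hnz _ 1 j h10 hj (fun h => hj1 h.symm), h01, hnz _ 1 j h10 hj
        (fun h => hj1 h.symm)]
      ring
  intro k i j hij
  rcases eq_or_ne i 0 with rfl | hi
  · exact h0j k j (Ne.symm hij)
  rcases eq_or_ne j 0 with rfl | hj
  · rw [Equiv.swap_comm]; exact h0j k i hi
  exact hnz k i j hi hj hij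

/-- An element `A` of `Sym²(W) ⊗ b_{r-1}`, i.e. a tensor `A_{k₁l₁k₂l₂…k_rl_r}`
(here with `r = r'+3 ≥ 3` pairs of indices) symmetric in the pair `(k₁,l₁)` and
antisymmetric in `k₂,…,k_r` and in `l₂,…,l_r`, which is moreover symmetric under
exchanging the pair `(k₁,l₁)` with `(k₂,l₂)` and with `(k₃,l₃)`, is antisymmetric
in all of `k₁,…,k_r` and in all of `l₁,…,l_r`; that is, `A ∈ Λʳ(W) ⊗ Λʳ(W)`. -/
theorem sym2_tensor_b_kernel_mem_lambda_lambda (n r' : ℕ)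
    (A : (Fin (r' + 3) → Fin n) → (Fin (r' + 3) → Fin n) → ℝ)
    (hpair : ∀ k l, A k l =
      A (Function.update k 0 (l 0)) (Function.update l 0 (k 0)))
    (hk : ∀ (k l : Fin (r' + 3) → Fin n) (i j : Fin (r' + 3)),
      i ≠ 0 → j ≠ 0 → i ≠ j → A (k ∘ Equiv.swap i j) l = - A k l)
    (hl : ∀ (k l : Fin (r' + 3) → Fin n) (i j : Fin (r' + 3)),
      i ≠ 0 → j ≠ 0 → i ≠ j → A k (l ∘ Equiv.swap i j) = - A k l)
    (hex12 : ∀ k l, A k l = A (k ∘ Equiv.swap 0 1) (l ∘ Equiv.swap 0 1))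
    (hex13 : ∀ k l, A k l = A (k ∘ Equiv.swap 0 2) (l ∘ Equiv.swap 0 2)) :
    (∀ (k l : Fin (r' + 3) → Fin n) (i j : Fin (r' + 3)), i ≠ j →
        A (k ∘ Equiv.swap i j) l = - A k l) ∧
    (∀ (k l : Fin (r' + 3) → Fin n) (i j : Fin (r' + 3)), i ≠ j →
        A k (l ∘ Equiv.swap i j) = - A k l) := by
  obtain ⟨h10, h20, h12⟩ := fin_facts r'
  -- conjugation identity: s02 ∘ s12 ∘ s02 = s01
  have hconj : Equiv.swap (0 : Fin (r' + 3)) 2 * Equiv.swap 1 2 * Equiv.swap 0 2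
      = Equiv.swap 0 1 := by
    rw [Equiv.swap_comm 0 2]
    exact Equiv.swap_mul_swap_mul_swap h12 h10
  have hdouble : ∀ (l : Fin (r' + 3) → Fin n) (a b : Fin (r' + 3)),
      (l ∘ Equiv.swap a b) ∘ Equiv.swap a b = l := by
    intro l a b; funext x
    simp [Function.comp, Equiv.swap_apply_self]
  -- the key step: antisymmetry in `k` under `swap 0 1`
  have keyk : ∀ k l, A (k ∘ Equiv.swap 0 1) l = - A k l := by
    intro k l
    have hfun : k ∘ Equiv.swap 0 1
        = (((k ∘ Equiv.swap 0 2) ∘ Equiv.swap 1 2) ∘ Equiv.swap 0 2) := by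
      rw [← hconj]; rfl
    have e1 := hex13 (((k ∘ Equiv.swap 0 2) ∘ Equiv.swap 1 2) ∘ Equiv.swap 0 2)
      ((l ∘ Equiv.swap 0 2) ∘ Equiv.swap 0 2)
    rw [hdouble l 0 2] at e1
    rw [hfun, e1, hdouble,
      hk (k ∘ Equiv.swap 0 2) (l ∘ Equiv.swap 0 2) 1 2 h10 h20 h12, ← hex13]
  -- antisymmetry in `l` under `swap 0 1`, via the pair-exchange symmetry
  have keyl : ∀ k l, A k (l ∘ Equiv.swap 0 1) = - A k l := by
    intro k l
    have e1 := hex12 k (l ∘ Equiv.swap 0 1)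
    rw [hdouble l 0 1] at e1
    rw [e1, keyk]
  constructor
  · intro k l
    exact extend_antisym (fun k => A k l) (fun k => keyk k l)
      (fun k i j hi hj hij => hk k l i j hi hj hij) k
  · intro k l
    exact extend_antisym (fun l => A k l) (fun l => keyl k l)
      (fun l i j hi hj hij => hl k l i j hi hj hij) l
end

section
/- For n ≥ 2, the linear map f₂ : b₂ → Sym²₀(Sym²₀(ℝⁿ)) induced by the inclusion Λ²W ⊗ Λ²W → Sym²W ⊗ Λ¹W ⊗ Λ¹W (followed by projection to traceless parts) is injective, where b₂ = ker(Λ²W ⊗ Λ²W → Λ³W ⊗ Λ¹W). -/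
/-- For `n ≥ 2`, the map `f₂ : b₂ → Sym²₀(Sym²₀ ℝⁿ)` is injective.  Here
`b₂ = ker(Λ²W ⊗ Λ²W → Λ³W ⊗ Λ¹W)` consists of tensors `A_{ij,kl}` antisymmetric in
`(i,j)` and in `(k,l)` satisfying the Bianchi identity, `f₂` sends `A` to
`B_{ik,jl} = A_{ij,kl} + A_{il,kj}` followed by projection onto the totally
trace-free part; injectivity is expressed by saying that if `B` is a pure trace
tensor (i.e. its totally trace-free projection vanishes) then `A = 0`. -/
theorem f2_injective (n : ℕ) (hn : 2 ≤ n)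
    (A : Fin n → Fin n → Fin n → Fin n → ℝ)
    (hanti1 : ∀ i j k l, A i j k l = - A j i k l)
    (hanti2 : ∀ i j k l, A i j k l = - A i j l k)
    (hBianchi : ∀ i j k l, A i j k l + A j k i l + A k i j l = 0)
    (htrace : ∃ X Y : Fin n → Fin n → ℝ, ∀ i k j l,
      A i j k l + A i l k j =
        (if i = k then X j l else 0) + (if j = l then Y i k else 0)) :
    ∀ i j k l, A i j k l = 0 := by
  obtain ⟨X, Y, hB⟩ := htrace
  -- vanishing when the first pair coincides
  have hA1 : ∀ i k l, A i i k l = 0 := by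
    intro i k l; have := hanti1 i i k l; linarith
  -- vanishing when the second pair coincides
  have hA2 : ∀ i j k, A i j k k = 0 := by
    intro i j k; have := hanti2 i j k k; linarith
  -- the off-diagonal part of X vanishes
  have hX0 : ∀ j l, j ≠ l → X j l = 0 := by
    intro j l h
    have hb := hB j j j l
    rw [if_pos rfl, if_neg h] at hb
    have h1 := hA1 j j l
    have h2 := hA2 j l j
    linarith
  -- the off-diagonal part of Y vanishes
  have hY0 : ∀ i k, i ≠ k → Y i k = 0 := by
    intro i k h
    have hb := hB i k i i
    rw [if_neg h, if_pos rfl] at hb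
    have h1 := hA1 i k i
    linarith
  -- key relation coming from the trace hypothesis
  have P3 : ∀ i j k l, i ≠ k → j ≠ l → A i j k l = - A i l k j := by
    intro i j k l h1 h2
    have hb := hB i k j l
    rw [if_neg h1, if_neg h2] at hb
    linarith
  -- components with slot 1 = slot 3 vanish
  have H13 : ∀ a b d, A a b a d = 0 := by
    intro a b d
    by_cases hab : a = b
    · subst hab; exact hA1 a a d
    by_cases had : a = d
    · subst had; exact hA2 a b a
    by_cases hbd : b = d
    · subst hbd
      have h1 := hanti2 a b a b
      have h2 := P3 a b b a hab (Ne.symm hab)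
      have h3 := hA1 a b b
      linarith
    · -- a, b, d pairwise distinct
      have hb := hB a a b d
      rw [if_pos rfl, if_neg hbd] at hb
      have hx := hX0 b d hbd
      have h2 := hBianchi b a d a
      have h3 := hanti2 b a d a
      have h4 := hanti1 b a a d
      have h5 := hanti2 a d b a
      have h6 := hA2 d b a
      linarith
  -- pair symmetry for pairwise distinct indices
  have pairSym : ∀ i j k l : Fin n, i ≠ j → i ≠ k → i ≠ l → j ≠ k → j ≠ l → k ≠ l →
      A i j k l = A k l i j := by
    intro i j k l hij hik hil hjk hjl hkl
    have t1 := P3 i j k l hik hjl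
    have t2 := hanti1 i l k j
    have t3 := P3 l i k j (Ne.symm hkl) hij
    have t4 := hanti2 l j k i
    have t5 := P3 l j i k (Ne.symm hil) hjk
    have t6 := hanti1 l k i j
    linarith
  -- cyclic invariance for pairwise distinct indices
  have cyc : ∀ i j k l : Fin n, i ≠ j → i ≠ k → i ≠ l → j ≠ k → j ≠ l → k ≠ l →
      A i j k l = A j k i l := by
    intro i j k l hij hik hil hjk hjl hkl
    have t1 := P3 i j k l hik hjl
    have t2 := pairSym i l k j hil hik hij (Ne.symm hkl) (Ne.symm hjl) (Ne.symm hjk)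
    have t3 := hanti1 k j i l
    linarith
  intro i j k l
  by_cases hij : i = j
  · subst hij; exact hA1 i k l
  by_cases hkl : k = l
  · subst hkl; exact hA2 i j k
  by_cases hik : i = k
  · subst hik; exact H13 i j l
  by_cases hil : i = l
  · subst hil
    have h1 := hanti2 i j k i
    have h2 := H13 i j k
    linarith
  by_cases hjk : j = k
  · subst hjk
    have h1 := hanti1 i j j l
    have h2 := H13 j i l
    linarith
  by_cases hjl : j = l
  · subst hjl
    have h1 := hanti2 i j k j
    have h2 := hanti1 i j j k
    have h3 := H13 j i k
    linarith
  · -- all indices pairwise distinct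
    have b := hBianchi i j k l
    have c1 := cyc i j k l hij hik hil hjk hjl hkl
    have c2 := cyc j k i l hjk (Ne.symm hij) hjl (Ne.symm hik) hkl hil
    linarith
end

section
/- Let G₀ ⊂ GL(Ṽ) be the set of matrices of the block lower-triangular form specified by (k_∅, k_a, k^a, k_{ab}; B, S, D, T) with k_∅ ∈ ℝ×, B upper block-triangular with B⁰₀ ∈ ℝ×, (Bⁱⱼ) ∈ CO(n), S symmetric, k_{ii} = 0, D^a_{ii} = 0, T_{iia} = 0, and C_B the induced conjugation action on Sym²W. Then G₀ is closed under matrix multiplication and inverses, i.e. G₀ is a subgroup of GL(Ṽ). -/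
open Matrix

/-- The model vector space `Ṽ = ℝ ⊕ W ⊕ W^∨ ⊕ Sym²W` for `W = ℝ^{n+1}`, with the
symmetric square realized inside the space of matrices. -/
abbrev Vtilde (n : ℕ) : Type :=
  ℝ × (Fin (n + 1) → ℝ) × (Fin (n + 1) → ℝ) × Matrix (Fin (n + 1)) (Fin (n + 1)) ℝ

/-- The set `G₀ ⊂ GL(Ṽ)` of block lower-triangular transformations specified by
the data `(k_∅, k_a, k^a, k_{ab}; B, S, D, T)`: `k_∅ ∈ ℝˣ`; `k_{ab}` symmetric
with vanishing spatial trace; `B` block-triangular with `B⁰₀ ∈ ℝˣ` and spatial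
block `b·O ∈ CO(n)`, `O ∈ SO(n)`; `S` symmetric; `D ∈ Hom(W, Sym²W)` with
`D^a_{ii} = 0`; `T ∈ Sym³W` with `T_{iia} = 0`; the diagonal blocks are
`(k_∅, B, k_∅ B⁻ᵀ, C_B/k_∅)` where `C_B` is the conjugation action of `B` on
`Sym²W`. -/
def G0Set (n : ℕ) : Set (Vtilde n → Vtilde n) :=
  {g | ∃ (k0 : ℝ) (ka ka' : Fin (n + 1) → ℝ)
        (kab B S : Matrix (Fin (n + 1)) (Fin (n + 1)) ℝ)
        (D : Fin (n + 1) → Matrix (Fin (n + 1)) (Fin (n + 1)) ℝ)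
        (T : Fin (n + 1) → Fin (n + 1) → Fin (n + 1) → ℝ)
        (b : ℝ) (O : Matrix (Fin n) (Fin n) ℝ),
      k0 ≠ 0 ∧
      kabᵀ = kab ∧ (∑ i : Fin n, kab i.succ i.succ = 0) ∧
      B 0 0 ≠ 0 ∧ (∀ i : Fin n, B i.succ 0 = 0) ∧ b ≠ 0 ∧
      O ∈ Matrix.orthogonalGroup (Fin n) ℝ ∧ O.det = 1 ∧
      (∀ i j : Fin n, B i.succ j.succ = b * O i j) ∧
      Sᵀ = S ∧
      (∀ a, (D a)ᵀ = D a) ∧ (∀ a, ∑ i : Fin n, D a i.succ i.succ = 0) ∧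
      (∀ a c e, T a c e = T c a e ∧ T a c e = T a e c) ∧
      (∀ a, ∑ i : Fin n, T i.succ i.succ a = 0) ∧
      g = fun x : Vtilde n =>
        (k0 * x.1,
         fun a => ka a * x.1 + B.mulVec x.2.1 a,
         fun a => ka' a * x.1 + (Bᵀ)⁻¹.mulVec (S.mulVec x.2.1) a +
           k0 * (Bᵀ)⁻¹.mulVec x.2.2.1 a,
         x.1 • kab +
           Matrix.of (fun p q => ∑ c, D c p q * x.2.1 c) +
           Matrix.of (fun p q => ∑ c, ∑ d, ∑ e,
             B p c * B q d * T c d e * x.2.2.1 e) +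
           k0⁻¹ • (B * x.2.2.2 * Bᵀ))}

/-! Each element of `G₀` is the map of some admissible data
`p = (k_∅, k_a, k^a, k_{ab}; B, S, D, T)`. The composite of the maps of `p` and `q` is the map of
explicit data `p * q`, whose `T`-part is `q.B⁻¹` acting on all three indices of `p.T`, and
solving `r * p = 1` block by block gives data `p.inv` whose map is a left inverse. The
constraints survive both operations because the admissible `B` (block triangular with spatial
block `b • O`, `O ∈ SO(n)`) form a group and conjugation by such a `B` scales the spatial trace
by `b²`. Finally, a left inverse which itself has a left inverse is two-sided. -/

section LinearCombination

variable {ι R M : Type*} [Fintype ι] [CommRing R] [AddCommGroup M] [Module R M]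

theorem Fintype.linearCombination_add_family (X Y : ι → M) (v : ι → R) :
    Fintype.linearCombination R (X + Y) v
      = Fintype.linearCombination R X v + Fintype.linearCombination R Y v := by
  simp [Fintype.linearCombination_apply, Finset.sum_add_distrib]

theorem Fintype.linearCombination_smul_family (r : R) (X : ι → M) (v : ι → R) :
    Fintype.linearCombination R (r • X) v = r • Fintype.linearCombination R X v := by
  simp [Fintype.linearCombination_apply, Finset.smul_sum, smul_comm r]

theorem Fintype.linearCombination_neg_family (X : ι → M) (v : ι → R) :
    Fintype.linearCombination R (-X) v = -Fintype.linearCombination R X v := by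
  simp [Fintype.linearCombination_apply]

theorem Fintype.linearCombination_mem {P : Submodule R M} {X : ι → M} (hX : ∀ i, X i ∈ P)
    (v : ι → R) : Fintype.linearCombination R X v ∈ P :=
  P.sum_mem fun i _ => P.smul_mem _ (hX i)

theorem Fintype.linearCombination_comp_col {κ : Type*} [Fintype κ] (Φ : (κ → R) →ₗ[R] M)
    (A : Matrix κ ι R) (v : ι → R) :
    Fintype.linearCombination R (fun f => Φ (A.col f)) v = Φ (A *ᵥ v) := by
  have hA : A *ᵥ v = ∑ f, v f • A.col f := by
    ext c; simp [mulVec, dotProduct, Finset.sum_apply, mul_comm]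
  simp [Fintype.linearCombination_apply, hA, map_sum]

theorem Fintype.linearCombination_conj {l m m' o : Type*} [Fintype m] [Fintype m']
    (X : ι → Matrix m m' R) (B : Matrix l m R) (A : Matrix m' o R) (v : ι → R) :
    Fintype.linearCombination R (fun c => B * X c * A) v
      = B * Fintype.linearCombination R X v * A := by
  simp [Fintype.linearCombination_apply, Matrix.mul_sum, Matrix.sum_mul]

end LinearCombination

section Tensors

variable {ι R : Type*} [CommSemiring R]

def tensorSlice (T : ι → ι → ι → R) (e : ι) : Matrix ι ι R := Matrix.of fun c d => T c d e

@[simp]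
theorem tensorSlice_zero : tensorSlice (0 : ι → ι → ι → R) = 0 := rfl

theorem tensorSlice_add (T T' : ι → ι → ι → R) :
    tensorSlice (T + T') = tensorSlice T + tensorSlice T' := rfl

theorem tensorSlice_smul (r : R) (T : ι → ι → ι → R) :
    tensorSlice (r • T) = r • tensorSlice T := rfl

variable (ι R) in
def symmetricTensors : Submodule R (ι → ι → ι → R) where
  carrier := {T | ∀ a c e, T a c e = T c a e ∧ T a c e = T a e c}
  add_mem' hS hT a c e :=
    ⟨by simp only [Pi.add_apply, (hS a c e).1, (hT a c e).1],
      by simp only [Pi.add_apply, (hS a c e).2, (hT a c e).2]⟩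
  zero_mem' := by simp
  smul_mem' r T hT a c e :=
    ⟨by simp only [Pi.smul_apply, (hT a c e).1], by simp only [Pi.smul_apply, (hT a c e).2]⟩

theorem transpose_tensorSlice {T : ι → ι → ι → R} (hT : T ∈ symmetricTensors ι R) (e : ι) :
    (tensorSlice T e)ᵀ = tensorSlice T e := by
  ext c d; exact (hT d c e).1

variable [Fintype ι]

def tensorMap (A : Matrix ι ι R) (T : ι → ι → ι → R) : ι → ι → ι → R :=
  fun c d e => ∑ c', ∑ d', ∑ e', A c c' * A d d' * A e e' * T c' d' e'

theorem linearCombination_tensorSlice_apply (T : ι → ι → ι → R) (v : ι → R) (c d : ι) :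
    Fintype.linearCombination R (tensorSlice T) v c d = ∑ e, T c d e * v e := by
  simp [Fintype.linearCombination_apply, Matrix.sum_apply, tensorSlice, mul_comm]

theorem linearCombination_tensorSlice_tensorMap (A : Matrix ι ι R) (T : ι → ι → ι → R)
    (v : ι → R) :
    Fintype.linearCombination R (tensorSlice (tensorMap A T)) v
      = A * Fintype.linearCombination R (tensorSlice T) (Aᵀ *ᵥ v) * Aᵀ := by
  ext c d
  simp only [linearCombination_tensorSlice_apply, tensorMap, Matrix.mul_apply, mulVec,
    dotProduct, transpose_apply, Finset.sum_mul, Finset.mul_sum]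
  conv_lhs => rw [Finset.sum_comm_cycle]
  refine Finset.sum_congr rfl fun _ _ => ?_
  conv_lhs => rw [Finset.sum_comm_cycle, Finset.sum_comm_cycle]
  refine Finset.sum_congr rfl fun _ _ => Finset.sum_congr rfl fun _ _ =>
    Finset.sum_congr rfl fun _ _ => by ring

theorem tensorSlice_ext [DecidableEq ι] {T T' : ι → ι → ι → R}
    (h : ∀ v, Fintype.linearCombination R (tensorSlice T) v
      = Fintype.linearCombination R (tensorSlice T') v) : T = T' := by
  ext c d e
  simpa [tensorSlice] using congrFun (congrFun (h (Pi.single e 1)) c) d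

theorem tensorMap_mul [DecidableEq ι] (A B : Matrix ι ι R) (T : ι → ι → ι → R) :
    tensorMap (A * B) T = tensorMap A (tensorMap B T) := by
  refine tensorSlice_ext fun v => ?_
  simp only [linearCombination_tensorSlice_tensorMap, transpose_mul, mulVec_mulVec,
    Matrix.mul_assoc]

theorem tensorMap_one [DecidableEq ι] (T : ι → ι → ι → R) : tensorMap 1 T = T := by
  ext c d e
  simp [tensorMap, Matrix.one_apply]

theorem tensorMap_mem_symmetricTensors {T : ι → ι → ι → R} (hT : T ∈ symmetricTensors ι R)
    (A : Matrix ι ι R) : tensorMap A T ∈ symmetricTensors ι R := by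
  intro a c e
  constructor
  · simp only [tensorMap]
    rw [Finset.sum_comm]
    refine Finset.sum_congr rfl fun d' _ => Finset.sum_congr rfl fun c' _ =>
      Finset.sum_congr rfl fun e' _ => ?_
    rw [(hT c' d' e').1]; ring
  · simp only [tensorMap]
    refine Finset.sum_congr rfl fun c' _ => ?_
    rw [Finset.sum_comm]
    refine Finset.sum_congr rfl fun e' _ => Finset.sum_congr rfl fun d' _ => ?_
    rw [(hT c' d' e').2]; ring

end Tensors

section Spatial

variable {n : ℕ}

variable (n) in
def symmSpatialTraceless (R : Type*) [Semiring R] :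
    Submodule R (Matrix (Fin (n + 1)) (Fin (n + 1)) R) where
  carrier := {X | Xᵀ = X ∧ (X.submatrix Fin.succ Fin.succ).trace = 0}
  add_mem' {X Y} hX hY := by
    refine ⟨by rw [transpose_add, hX.1, hY.1], ?_⟩
    change (X.submatrix Fin.succ Fin.succ + Y.submatrix Fin.succ Fin.succ).trace = 0
    rw [trace_add, hX.2, hY.2, add_zero]
  zero_mem' := by simp
  smul_mem' r X hX := by
    refine ⟨by rw [transpose_smul, hX.1], ?_⟩
    change (r • X.submatrix Fin.succ Fin.succ).trace = 0
    rw [trace_smul, hX.2, smul_zero]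

theorem submatrix_succ_mul {R : Type*} [NonUnitalNonAssocSemiring R]
    {Y Z : Matrix (Fin (n + 1)) (Fin (n + 1)) R}
    (h : ∀ i j : Fin n, Y i.succ 0 * Z 0 j.succ = 0) :
    (Y * Z).submatrix Fin.succ Fin.succ
      = Y.submatrix Fin.succ Fin.succ * Z.submatrix Fin.succ Fin.succ := by
  ext i j
  simp [mul_apply, Fin.sum_univ_succ, h]

theorem mul_apply_zero_of_succ_zero {R : Type*} [NonUnitalNonAssocSemiring R]
    {X B : Matrix (Fin (n + 1)) (Fin (n + 1)) R} (hB : ∀ i : Fin n, B i.succ 0 = 0)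
    (i : Fin (n + 1)) : (X * B) i 0 = X i 0 * B 0 0 := by
  simp [mul_apply, Fin.sum_univ_succ, hB]

theorem transpose_mul_self_of_mem_specialOrthogonalGroup {O : Matrix (Fin n) (Fin n) ℝ}
    (hO : O ∈ specialOrthogonalGroup (Fin n) ℝ) : Oᵀ * O = 1 :=
  (mem_orthogonalGroup_iff' (Fin n) ℝ).mp (mem_specialOrthogonalGroup_iff.mp hO).1

structure IsBlockCO (B : Matrix (Fin (n + 1)) (Fin (n + 1)) ℝ) (b : ℝ)
    (O : Matrix (Fin n) (Fin n) ℝ) : Prop where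
  zero_zero_ne : B 0 0 ≠ 0
  succ_zero : ∀ i : Fin n, B i.succ 0 = 0
  scale_ne : b ≠ 0
  mem_SO : O ∈ specialOrthogonalGroup (Fin n) ℝ
  spatial : B.submatrix Fin.succ Fin.succ = b • O

namespace IsBlockCO

variable {B C : Matrix (Fin (n + 1)) (Fin (n + 1)) ℝ} {b c : ℝ} {O P : Matrix (Fin n) (Fin n) ℝ}

theorem det_eq (hB : IsBlockCO B b O) : B.det = B 0 0 * b ^ n := by
  rw [det_succ_column_zero, Fin.sum_univ_succ]
  simp [hB.succ_zero, hB.spatial, (mem_specialOrthogonalGroup_iff.mp hB.mem_SO).2]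

theorem isUnit_det (hB : IsBlockCO B b O) : IsUnit B.det := by
  rw [hB.det_eq]
  exact (mul_ne_zero hB.zero_zero_ne (pow_ne_zero n hB.scale_ne)).isUnit

theorem mul (hB : IsBlockCO B b O) (hC : IsBlockCO C c P) :
    IsBlockCO (B * C) (b * c) (O * P) where
  zero_zero_ne := by
    rw [mul_apply_zero_of_succ_zero hC.succ_zero]
    exact mul_ne_zero hB.zero_zero_ne hC.zero_zero_ne
  succ_zero i := by rw [mul_apply_zero_of_succ_zero hC.succ_zero, hB.succ_zero, zero_mul]
  scale_ne := mul_ne_zero hB.scale_ne hC.scale_ne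
  mem_SO := mul_mem hB.mem_SO hC.mem_SO
  spatial := by
    rw [submatrix_succ_mul fun i j => by rw [hB.succ_zero, zero_mul], hB.spatial, hC.spatial,
      smul_mul_smul_comm]

theorem inv (hB : IsBlockCO B b O) : IsBlockCO B⁻¹ b⁻¹ Oᵀ := by
  have hcol (i : Fin (n + 1)) :
      B⁻¹ i 0 * B 0 0 = (1 : Matrix (Fin (n + 1)) (Fin (n + 1)) ℝ) i 0 := by
    rw [← mul_apply_zero_of_succ_zero hB.succ_zero, nonsing_inv_mul B hB.isUnit_det]
  have hsp : b • O * B⁻¹.submatrix Fin.succ Fin.succ = 1 := by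
    rw [← hB.spatial, ← submatrix_succ_mul fun i j => by rw [hB.succ_zero, zero_mul],
      mul_nonsing_inv B hB.isUnit_det, submatrix_one _ (Fin.succ_injective n)]
  have hOinv : (b⁻¹ • Oᵀ) * (b • O) = 1 := by
    rw [smul_mul_smul_comm, transpose_mul_self_of_mem_specialOrthogonalGroup hB.mem_SO,
      inv_mul_cancel₀ hB.scale_ne, one_smul]
  refine ⟨fun h => ?_, fun i => ?_, inv_ne_zero hB.scale_ne, ?_,
    (left_inv_eq_right_inv hOinv hsp).symm⟩
  · simpa [h] using hcol 0
  · simpa [hB.zero_zero_ne, Fin.succ_ne_zero] using hcol i.succ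
  · simpa [specialUnitaryGroup.coe_star, star_eq_conjTranspose] using
      (star (⟨O, hB.mem_SO⟩ : specialOrthogonalGroup (Fin n) ℝ)).2

theorem conj_mem (hB : IsBlockCO B b O) {X : Matrix (Fin (n + 1)) (Fin (n + 1)) ℝ}
    (hX : X ∈ symmSpatialTraceless n ℝ) : B * X * Bᵀ ∈ symmSpatialTraceless n ℝ := by
  refine ⟨by rw [transpose_mul, transpose_mul, transpose_transpose, hX.1, Matrix.mul_assoc], ?_⟩
  rw [Matrix.mul_assoc, submatrix_succ_mul fun i j => by rw [hB.succ_zero, zero_mul],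
    submatrix_succ_mul fun i j => by rw [transpose_apply, hB.succ_zero, mul_zero],
    ← Matrix.mul_assoc, trace_mul_cycle, ← transpose_submatrix, hB.spatial, transpose_smul,
    smul_mul_smul_comm, transpose_mul_self_of_mem_specialOrthogonalGroup hB.mem_SO]
  simp [hX.2]

theorem tensorSlice_tensorMap_mem (hB : IsBlockCO B b O)
    {T : Fin (n + 1) → Fin (n + 1) → Fin (n + 1) → ℝ}
    (hT : ∀ e, tensorSlice T e ∈ symmSpatialTraceless n ℝ) (e : Fin (n + 1)) :
    tensorSlice (tensorMap B T) e ∈ symmSpatialTraceless n ℝ := by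
  have h := linearCombination_tensorSlice_tensorMap B T (Pi.single e 1)
  rw [Fintype.linearCombination_apply_single, one_smul] at h
  rw [h]
  exact hB.conj_mem (Fintype.linearCombination_mem hT _)

end IsBlockCO

end Spatial

@[ext]
structure G0Params (n : ℕ) where
  k0 : ℝ
  ka : Fin (n + 1) → ℝ
  ka' : Fin (n + 1) → ℝ
  kab : Matrix (Fin (n + 1)) (Fin (n + 1)) ℝ
  B : Matrix (Fin (n + 1)) (Fin (n + 1)) ℝ
  S : Matrix (Fin (n + 1)) (Fin (n + 1)) ℝ
  D : Fin (n + 1) → Matrix (Fin (n + 1)) (Fin (n + 1)) ℝ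
  T : Fin (n + 1) → Fin (n + 1) → Fin (n + 1) → ℝ

namespace G0Params

variable {n : ℕ}

noncomputable def toFun (p : G0Params n) (x : Vtilde n) : Vtilde n :=
  (p.k0 * x.1,
   x.1 • p.ka + p.B *ᵥ x.2.1,
   x.1 • p.ka' + p.Bᵀ⁻¹ *ᵥ (p.S *ᵥ x.2.1) + p.k0 • p.Bᵀ⁻¹ *ᵥ x.2.2.1,
   x.1 • p.kab + Fintype.linearCombination ℝ p.D x.2.1
     + p.B * Fintype.linearCombination ℝ (tensorSlice p.T) x.2.2.1 * p.Bᵀ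
     + p.k0⁻¹ • (p.B * x.2.2.2 * p.Bᵀ))

structure IsAdmissible (p : G0Params n) : Prop where
  k0_ne : p.k0 ≠ 0
  isBlockCO : ∃ b O, IsBlockCO p.B b O
  kab_mem : p.kab ∈ symmSpatialTraceless n ℝ
  S_symm : p.Sᵀ = p.S
  D_mem : ∀ a, p.D a ∈ symmSpatialTraceless n ℝ
  T_mem : p.T ∈ symmetricTensors (Fin (n + 1)) ℝ
  tensorSlice_T_mem : ∀ e, tensorSlice p.T e ∈ symmSpatialTraceless n ℝ

theorem IsAdmissible.isUnit_det {p : G0Params n} (hp : p.IsAdmissible) : IsUnit p.B.det :=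
  let ⟨_, _, hB⟩ := hp.isBlockCO; hB.isUnit_det

theorem toFun_mk (k0 : ℝ) (ka ka' : Fin (n + 1) → ℝ)
    (kab B S : Matrix (Fin (n + 1)) (Fin (n + 1)) ℝ)
    (D : Fin (n + 1) → Matrix (Fin (n + 1)) (Fin (n + 1)) ℝ)
    (T : Fin (n + 1) → Fin (n + 1) → Fin (n + 1) → ℝ) :
    toFun ⟨k0, ka, ka', kab, B, S, D, T⟩ = fun x : Vtilde n =>
      (k0 * x.1,
       fun a => ka a * x.1 + B.mulVec x.2.1 a,
       fun a => ka' a * x.1 + (Bᵀ)⁻¹.mulVec (S.mulVec x.2.1) a + k0 * (Bᵀ)⁻¹.mulVec x.2.2.1 a,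
       x.1 • kab +
         Matrix.of (fun p q => ∑ c, D c p q * x.2.1 c) +
         Matrix.of (fun p q => ∑ c, ∑ d, ∑ e, B p c * B q d * T c d e * x.2.2.1 e) +
         k0⁻¹ • (B * x.2.2.2 * Bᵀ)) := by
  have hD (v : Fin (n + 1) → ℝ) :
      Matrix.of (fun p q => ∑ c, D c p q * v c) = Fintype.linearCombination ℝ D v := by
    ext p q
    simp [Fintype.linearCombination_apply, Matrix.sum_apply, mul_comm]
  have hT (v : Fin (n + 1) → ℝ) :
      Matrix.of (fun p q => ∑ c, ∑ d, ∑ e, B p c * B q d * T c d e * v e)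
        = B * Fintype.linearCombination ℝ (tensorSlice T) v * Bᵀ := by
    ext p q
    simp only [of_apply, Matrix.mul_apply, linearCombination_tensorSlice_apply, transpose_apply,
      Finset.sum_mul, Finset.mul_sum]
    rw [Finset.sum_comm]
    exact Finset.sum_congr rfl fun _ _ => Finset.sum_congr rfl fun _ _ =>
      Finset.sum_congr rfl fun _ _ => by ring
  funext x
  simp only [toFun, hD, hT, Prod.mk.injEq]
  refine ⟨trivial, ?_, ?_, trivial⟩ <;> funext a <;> simp [mul_comm]

theorem mem_G0Set_iff {g : Vtilde n → Vtilde n} :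
    g ∈ G0Set n ↔ ∃ p : G0Params n, p.IsAdmissible ∧ g = p.toFun := by
  constructor
  · rintro ⟨k0, ka, ka', kab, B, S, D, T, b, O, hk0, hkab, hkabt, hB00, hBcol, hb, hO, hOdet,
      hBsp, hS, hD, hDt, hT, hTt, rfl⟩
    refine ⟨⟨k0, ka, ka', kab, B, S, D, T⟩, ⟨hk0, ⟨b, O, ?_⟩, ⟨hkab, hkabt⟩, hS,
      fun a => ⟨hD a, hDt a⟩, hT, fun e => ⟨transpose_tensorSlice hT e, hTt e⟩⟩,
      (toFun_mk ..).symm⟩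
    exact ⟨hB00, hBcol, hb, mem_specialOrthogonalGroup_iff.mpr ⟨hO, hOdet⟩,
      by ext i j; exact hBsp i j⟩
  · rintro ⟨⟨k0, ka, ka', kab, B, S, D, T⟩, hp, rfl⟩
    obtain ⟨b, O, hB⟩ := hp.isBlockCO
    have hO := mem_specialOrthogonalGroup_iff.mp hB.mem_SO
    exact ⟨k0, ka, ka', kab, B, S, D, T, b, O, hp.k0_ne, hp.kab_mem.1, hp.kab_mem.2,
      hB.zero_zero_ne, hB.succ_zero, hB.scale_ne, hO.1, hO.2,
      fun i j => congrFun (congrFun hB.spatial i) j, hp.S_symm, fun a => (hp.D_mem a).1,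
      fun a => (hp.D_mem a).2, hp.T_mem, fun e => (hp.tensorSlice_T_mem e).2, toFun_mk ..⟩

instance : One (G0Params n) := ⟨⟨1, 0, 0, 0, 1, 0, 0, 0⟩⟩

/-- The first column of `p * q` is `p` applied to the first column of `q`. -/
noncomputable instance : Mul (G0Params n) where
  mul p q :=
    { k0 := p.k0 * q.k0
      ka := q.k0 • p.ka + p.B *ᵥ q.ka
      ka' := q.k0 • p.ka' + (p.Bᵀ⁻¹ *ᵥ (p.S *ᵥ q.ka) + p.k0 • p.Bᵀ⁻¹ *ᵥ q.ka')
      kab := q.k0 • p.kab + (Fintype.linearCombination ℝ p.D q.ka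
        + p.B * Fintype.linearCombination ℝ (tensorSlice p.T) q.ka' * p.Bᵀ
        + p.k0⁻¹ • (p.B * q.kab * p.Bᵀ))
      B := p.B * q.B
      S := q.Bᵀ * p.S * q.B + p.k0 • q.S
      D := fun f => Fintype.linearCombination ℝ p.D (q.B.col f)
        + p.B * Fintype.linearCombination ℝ (tensorSlice p.T) ((q.Bᵀ⁻¹ * q.S).col f) * p.Bᵀ
        + p.k0⁻¹ • (p.B * q.D f * p.Bᵀ)
      T := q.k0 • tensorMap q.B⁻¹ p.T + p.k0⁻¹ • q.T }

theorem toFun_one : (1 : G0Params n).toFun = id := by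
  funext x
  simp [toFun, show (1 : G0Params n) = ⟨1, 0, 0, 0, 1, 0, 0, 0⟩ from rfl,
    Fintype.linearCombination_apply]

theorem linearCombination_mul_D (p q : G0Params n) (v : Fin (n + 1) → ℝ) :
    Fintype.linearCombination ℝ (p * q).D v
      = Fintype.linearCombination ℝ p.D (q.B *ᵥ v)
        + p.B * Fintype.linearCombination ℝ (tensorSlice p.T) (q.Bᵀ⁻¹ *ᵥ (q.S *ᵥ v)) * p.Bᵀ
        + p.k0⁻¹ • (p.B * Fintype.linearCombination ℝ q.D v * p.Bᵀ) := by
  have hD : (p * q).D = (fun f => Fintype.linearCombination ℝ p.D (q.B.col f))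
      + (fun f => Fintype.linearCombination ℝ (fun e => p.B * tensorSlice p.T e * p.Bᵀ)
        ((q.Bᵀ⁻¹ * q.S).col f)) + p.k0⁻¹ • fun f => p.B * q.D f * p.Bᵀ := by
    funext f
    simp only [Fintype.linearCombination_conj, Pi.add_apply, Pi.smul_apply]
    rfl
  rw [hD, Fintype.linearCombination_add_family, Fintype.linearCombination_add_family,
    Fintype.linearCombination_smul_family, Fintype.linearCombination_comp_col,
    Fintype.linearCombination_comp_col, Fintype.linearCombination_conj,
    Fintype.linearCombination_conj, mulVec_mulVec]

theorem conj_linearCombination_mul_T (p q : G0Params n) (hq : IsUnit q.B.det)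
    (v : Fin (n + 1) → ℝ) :
    (p * q).B * Fintype.linearCombination ℝ (tensorSlice (p * q).T) v * (p * q).Bᵀ
      = q.k0 • (p.B * Fintype.linearCombination ℝ (tensorSlice p.T) (q.Bᵀ⁻¹ *ᵥ v) * p.Bᵀ)
        + p.k0⁻¹ • (p.B * (q.B * Fintype.linearCombination ℝ (tensorSlice q.T) v * q.Bᵀ)
          * p.Bᵀ) := by
  change p.B * q.B * Fintype.linearCombination ℝ
    (tensorSlice (q.k0 • tensorMap q.B⁻¹ p.T + p.k0⁻¹ • q.T)) v * (p.B * q.B)ᵀ = _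
  rw [tensorSlice_add, tensorSlice_smul, tensorSlice_smul, Fintype.linearCombination_add_family,
    Fintype.linearCombination_smul_family, Fintype.linearCombination_smul_family,
    linearCombination_tensorSlice_tensorMap, transpose_nonsing_inv]
  simp only [Matrix.mul_add, Matrix.add_mul, Matrix.mul_smul, Matrix.smul_mul, transpose_mul,
    Matrix.mul_assoc, mul_nonsing_inv_cancel_left _ _ hq,
    nonsing_inv_mul_cancel_left _ _ (isUnit_det_transpose _ hq)]

theorem toFun_mul (p q : G0Params n) (hq : IsUnit q.B.det) :
    (p * q).toFun = p.toFun ∘ q.toFun := by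
  funext x
  simp only [toFun, Function.comp_apply, Prod.mk.injEq]
  refine ⟨mul_assoc _ _ _, ?_, ?_, ?_⟩
  · change x.1 • (q.k0 • p.ka + p.B *ᵥ q.ka) + (p.B * q.B) *ᵥ x.2.1 = _
    simp only [mulVec_add, mulVec_smul, ← mulVec_mulVec]
    module
  · change x.1 • (q.k0 • p.ka' + (p.Bᵀ⁻¹ *ᵥ (p.S *ᵥ q.ka) + p.k0 • p.Bᵀ⁻¹ *ᵥ q.ka'))
      + (p.B * q.B)ᵀ⁻¹ *ᵥ ((q.Bᵀ * p.S * q.B + p.k0 • q.S) *ᵥ x.2.1)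
      + (p.k0 * q.k0) • (p.B * q.B)ᵀ⁻¹ *ᵥ x.2.2.1 = _
    have hcancel (w : Fin (n + 1) → ℝ) : q.Bᵀ⁻¹ *ᵥ (q.Bᵀ *ᵥ w) = w := by
      rw [mulVec_mulVec, nonsing_inv_mul _ (isUnit_det_transpose _ hq), one_mulVec]
    simp only [transpose_mul, Matrix.mul_inv_rev, mulVec_add, mulVec_smul, add_mulVec,
      smul_mulVec, ← mulVec_mulVec, hcancel]
    module
  · rw [linearCombination_mul_D, conj_linearCombination_mul_T p q hq]
    change x.1 • (q.k0 • p.kab + (Fintype.linearCombination ℝ p.D q.ka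
        + p.B * Fintype.linearCombination ℝ (tensorSlice p.T) q.ka' * p.Bᵀ
        + p.k0⁻¹ • (p.B * q.kab * p.Bᵀ))) + _ + _
      + (p.k0 * q.k0)⁻¹ • (p.B * q.B * x.2.2.2 * (p.B * q.B)ᵀ) = _
    simp only [map_add, map_smul, Matrix.mul_add, Matrix.add_mul, Matrix.mul_smul,
      Matrix.smul_mul, transpose_mul, Matrix.mul_assoc, mul_inv, smul_add, smul_smul]
    module

theorem IsAdmissible.mul {p q : G0Params n} (hp : p.IsAdmissible) (hq : q.IsAdmissible) :
    (p * q).IsAdmissible := by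
  obtain ⟨b, O, hB⟩ := hp.isBlockCO
  obtain ⟨c, P, hC⟩ := hq.isBlockCO
  have hT := Fintype.linearCombination_mem hp.tensorSlice_T_mem
  refine ⟨mul_ne_zero hp.k0_ne hq.k0_ne, ⟨_, _, hB.mul hC⟩, ?_, ?_, fun f => ?_, ?_, fun e => ?_⟩
  · exact add_mem (Submodule.smul_mem _ _ hp.kab_mem) (add_mem (add_mem
      (Fintype.linearCombination_mem hp.D_mem _) (hB.conj_mem (hT _)))
      (Submodule.smul_mem _ _ (hB.conj_mem hq.kab_mem)))
  · change (q.Bᵀ * p.S * q.B + p.k0 • q.S)ᵀ = q.Bᵀ * p.S * q.B + p.k0 • q.S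
    rw [transpose_add, transpose_smul, transpose_mul, transpose_mul, transpose_transpose,
      hp.S_symm, hq.S_symm, Matrix.mul_assoc]
  · exact add_mem (add_mem (Fintype.linearCombination_mem hp.D_mem _) (hB.conj_mem (hT _)))
      (Submodule.smul_mem _ _ (hB.conj_mem (hq.D_mem f)))
  · exact add_mem (Submodule.smul_mem _ _ (tensorMap_mem_symmetricTensors hp.T_mem _))
      (Submodule.smul_mem _ _ hq.T_mem)
  · exact add_mem
      (Submodule.smul_mem _ _ (hC.inv.tensorSlice_tensorMap_mem hp.tensorSlice_T_mem e))
      (Submodule.smul_mem _ _ (hq.tensorSlice_T_mem e))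

noncomputable def invCore (p : G0Params n) : G0Params n :=
  let T := tensorMap p.B (-p.T)
  let Y := fun f => p.B⁻¹ * Fintype.linearCombination ℝ (tensorSlice T) ((p.Bᵀ⁻¹ * p.S).col f)
    * (p.B⁻¹)ᵀ + p.k0 • (p.B⁻¹ * p.D f * (p.B⁻¹)ᵀ)
  { k0 := p.k0⁻¹
    ka := 0
    ka' := 0
    kab := 0
    B := p.B⁻¹
    S := -(p.k0⁻¹ • ((p.B⁻¹)ᵀ * p.S * p.B⁻¹))
    D := -fun g => Fintype.linearCombination ℝ Y ((p.B⁻¹).col g)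
    T := T }

/-- `invCore p * p` has the blocks of the identity; the first column of `p.inv` cancels its
first column. -/
noncomputable def inv (p : G0Params n) : G0Params n :=
  { p.invCore with
    ka := -(p.k0⁻¹ • (p.invCore * p).ka)
    ka' := -(p.k0⁻¹ • (p.invCore * p).ka')
    kab := -(p.k0⁻¹ • (p.invCore * p).kab) }

theorem inv_mul (p : G0Params n) (hk : p.k0 ≠ 0) (hB : IsUnit p.B.det) : p.inv * p = 1 := by
  have cancel {M : Type} [AddCommGroup M] [Module ℝ M] (w : M) :
      p.k0 • -(p.k0⁻¹ • (p.k0 • 0 + w)) + w = 0 := by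
    simp [smul_smul, hk]
  have hinv : p.B⁻¹ * p.B = 1 := nonsing_inv_mul _ hB
  ext1
  · exact inv_mul_cancel₀ hk
  · exact cancel _
  · exact cancel _
  · exact cancel _
  · exact hinv
  · change p.Bᵀ * -(p.k0⁻¹ • ((p.B⁻¹)ᵀ * p.S * p.B⁻¹)) * p.B + p.k0⁻¹ • p.S = 0
    have ht : p.Bᵀ * (p.B⁻¹)ᵀ = 1 := by rw [← transpose_mul, hinv, transpose_one]
    simp only [Matrix.mul_neg, Matrix.neg_mul, Matrix.mul_smul, Matrix.smul_mul,
      ← Matrix.mul_assoc, ht, Matrix.one_mul]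
    rw [Matrix.mul_assoc, hinv, Matrix.mul_one, neg_add_cancel]
  · funext f
    have hcol : p.B⁻¹ *ᵥ p.B.col f = Pi.single f 1 := by
      rw [← mulVec_single_one, mulVec_mulVec, hinv, one_mulVec]
    change Fintype.linearCombination ℝ (-fun g => Fintype.linearCombination ℝ _ ((p.B⁻¹).col g))
      (p.B.col f) + p.B⁻¹ * Fintype.linearCombination ℝ (tensorSlice (tensorMap p.B (-p.T)))
        ((p.Bᵀ⁻¹ * p.S).col f) * (p.B⁻¹)ᵀ + p.k0⁻¹⁻¹ • (p.B⁻¹ * p.D f * (p.B⁻¹)ᵀ) = 0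
    rw [Fintype.linearCombination_neg_family, Fintype.linearCombination_comp_col, hcol,
      Fintype.linearCombination_apply_single, one_smul, inv_inv]
    abel
  · change p.k0 • tensorMap p.B⁻¹ (tensorMap p.B (-p.T)) + p.k0⁻¹⁻¹ • p.T = 0
    rw [← tensorMap_mul, hinv, tensorMap_one, inv_inv, smul_neg, neg_add_cancel]

theorem IsAdmissible.invCore {p : G0Params n} (hp : p.IsAdmissible) :
    p.invCore.IsAdmissible := by
  obtain ⟨b, O, hB⟩ := hp.isBlockCO
  have hT := hB.tensorSlice_tensorMap_mem (T := -p.T) fun e => neg_mem (hp.tensorSlice_T_mem e)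
  have hY (f : Fin (n + 1)) :
      p.B⁻¹ * Fintype.linearCombination ℝ (tensorSlice (tensorMap p.B (-p.T)))
        ((p.Bᵀ⁻¹ * p.S).col f) * (p.B⁻¹)ᵀ + p.k0 • (p.B⁻¹ * p.D f * (p.B⁻¹)ᵀ)
        ∈ symmSpatialTraceless n ℝ :=
    add_mem (hB.inv.conj_mem (Fintype.linearCombination_mem hT _))
      (Submodule.smul_mem _ _ (hB.inv.conj_mem (hp.D_mem f)))
  refine ⟨inv_ne_zero hp.k0_ne, ⟨_, _, hB.inv⟩, zero_mem _, ?_,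
    fun g => neg_mem (Fintype.linearCombination_mem hY _),
    tensorMap_mem_symmetricTensors (neg_mem hp.T_mem) _, hT⟩
  change (-(p.k0⁻¹ • ((p.B⁻¹)ᵀ * p.S * p.B⁻¹)))ᵀ = -(p.k0⁻¹ • ((p.B⁻¹)ᵀ * p.S * p.B⁻¹))
  rw [transpose_neg, transpose_smul, transpose_mul, transpose_mul, transpose_transpose,
    hp.S_symm, Matrix.mul_assoc]

theorem IsAdmissible.inv {p : G0Params n} (hp : p.IsAdmissible) : p.inv.IsAdmissible :=
  { hp.invCore with
    kab_mem := neg_mem (Submodule.smul_mem _ _ (hp.invCore.mul hp).kab_mem) }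

theorem exists_left_inverse {g : Vtilde n → Vtilde n} (hg : g ∈ G0Set n) :
    ∃ h ∈ G0Set n, h ∘ g = id := by
  obtain ⟨p, hp, rfl⟩ := mem_G0Set_iff.mp hg
  refine ⟨p.inv.toFun, mem_G0Set_iff.mpr ⟨_, hp.inv, rfl⟩, ?_⟩
  rw [← toFun_mul _ _ hp.isUnit_det, inv_mul p hp.k0_ne hp.isUnit_det, toFun_one]

theorem comp_mem {g h : Vtilde n → Vtilde n} (hg : g ∈ G0Set n) (hh : h ∈ G0Set n) :
    g ∘ h ∈ G0Set n := by
  obtain ⟨p, hp, rfl⟩ := mem_G0Set_iff.mp hg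
  obtain ⟨q, hq, rfl⟩ := mem_G0Set_iff.mp hh
  exact mem_G0Set_iff.mpr ⟨p * q, hp.mul hq, (toFun_mul p q hq.isUnit_det).symm⟩

end G0Params

/-- `G₀` is closed under composition and inverses, i.e. `G₀` is a subgroup of
`GL(Ṽ)`. -/
theorem G0_is_subgroup (n : ℕ) :
    (∀ g ∈ G0Set n, ∀ h ∈ G0Set n, (g ∘ h) ∈ G0Set n) ∧
    (∀ g ∈ G0Set n, ∃ h ∈ G0Set n, g ∘ h = id ∧ h ∘ g = id) := by
  refine ⟨fun g hg h hh => G0Params.comp_mem hg hh, fun g hg => ?_⟩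
  obtain ⟨h, hh, hhg⟩ := G0Params.exists_left_inverse hg
  obtain ⟨h', -, hh'h⟩ := G0Params.exists_left_inverse hh
  have hh'g : h' = g := Function.LeftInverse.eq_rightInverse (congrFun hh'h) (congrFun hhg)
  exact ⟨h, hh, hh'g ▸ hh'h, hhg⟩
end
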